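/- Let 𝔤 be the 3-step nilpotent Lie algebra of the previous context. Then the linear map j: 𝔤 → 𝔤 defined by j(eₖ) = eₖ for k ∈ {3,4,7} and j(eₖ) = −eₖ for k ∈ {1,2,5,6} is a Lie algebra automorphism of order 2. -/
import Mathlib


/-- The bracket of the 7-dimensional nilpotent Lie algebra `𝔤` (0-based coordinates):
`[e₁,e₂] = −e₄`, `[e₂,e₃] = −e₅`, `[e₁,e₃] = e₆`, `[e₁,e₆] = 2e₇`, `[e₂,e₅] = −2e₇`,
`[e₂,e₆] = −2e₇`, `[e₃,e₄] = 2e₇`. -/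
def gBracket (x y : Fin 7 → ℝ) : Fin 7 → ℝ :=
  ![0, 0, 0,
    -(x 0 * y 1 - x 1 * y 0),
    -(x 1 * y 2 - x 2 * y 1),
    x 0 * y 2 - x 2 * y 0,
    2 * (x 0 * y 5 - x 5 * y 0) - 2 * (x 1 * y 4 - x 4 * y 1)
      - 2 * (x 1 * y 5 - x 5 * y 1) + 2 * (x 2 * y 3 - x 3 * y 2)]

/-- The linear map `j` fixing `e₃, e₄, e₇` and negating `e₁, e₂, e₅, e₆`. -/
def jInv (x : Fin 7 → ℝ) : Fin 7 → ℝ :=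
  ![-x 0, -x 1, x 2, x 3, -x 4, -x 5, x 6]


private lemma vec7_five {α : Type*} (a b c d e f g : α) :
    (![a, b, c, d, e, f, g] : Fin 7 → α) 5 = f := rfl

private lemma vec7_six {α : Type*} (a b c d e f g : α) :
    (![a, b, c, d, e, f, g] : Fin 7 → α) 6 = g := rfl

/-- The map `j` is a Lie algebra automorphism of `𝔤` of order 2: it is linear,
preserves the bracket, squares to the identity, and is not the identity. -/
theorem jInv_automorphism_order_two :
    (∀ (a : ℝ) (x y : Fin 7 → ℝ), jInv (a • x + y) = a • jInv x + jInv y) ∧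
    (∀ x y : Fin 7 → ℝ, jInv (gBracket x y) = gBracket (jInv x) (jInv y)) ∧
    (∀ x : Fin 7 → ℝ, jInv (jInv x) = x) ∧
    jInv ≠ id := by
  refine ⟨?_, ?_, ?_, ?_⟩
  · intro a x y
    funext i
    fin_cases i <;> simp [jInv, vec7_five, vec7_six] <;> ring
  · intro x y
    funext i
    fin_cases i <;> simp [jInv, gBracket, vec7_five, vec7_six] <;> ring
  · intro x
    funext i
    fin_cases i <;> simp [jInv, vec7_five, vec7_six]
  · intro h
    have := congrFun (congrFun h (fun _ => 1)) 0
    simp [jInv, vec7_five, vec7_six] at this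
    linarith
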